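/- Let ψ ∈ L∞(𝕋) be such that the Hankel operator H_ψ has nonzero kernel. Then T_z* H_ψ T_z − H_ψ = H_{(z̄² − 1)ψ}, and H_{(z̄² − 1)ψ} also has nonzero kernel; conversely, if H_{(z̄² − 1)ψ} has nonzero kernel then so does H_ψ. -/

import Mathlib

open MeasureTheory Complex AddCircle
open scoped InnerProductSpace ENNReal Real

noncomputable section

namespace PaperTH

instance fact2pi : Fact (0 < 2 * Real.pi) := ⟨by positivity⟩

/-- The circle, as `ℝ / 2πℤ`. -/
abbrev 𝕋c := AddCircle (2 * Real.pi)

/-- The normalized Lebesgue (Haar) measure on the circle. -/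
abbrev μc : Measure 𝕋c := haarAddCircle

/-- `L²(𝕋)`. -/
abbrev L2 := Lp ℂ 2 μc

/-- The Hardy space `H²(𝕋)`: members of `L²(𝕋)` all of whose Fourier coefficients of
negative index vanish. -/
def Hardy : Submodule ℂ L2 where
  carrier := {f | ∀ n : ℤ, n < 0 → fourierCoeff (⇑f) n = 0}
  add_mem' := by
    intro f g hf hg n hn
    have hf' := hf n hn
    have hg' := hg n hn
    rw [← fourierBasis_repr] at hf' hg' ⊢
    rw [map_add, lp.coeFn_add, Pi.add_apply, hf', hg', add_zero]
  zero_mem' := by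
    intro n hn
    rw [← fourierBasis_repr, map_zero, lp.coeFn_zero, Pi.zero_apply]
  smul_mem' := by
    intro c f hf n hn
    have hf' := hf n hn
    rw [← fourierBasis_repr] at hf' ⊢
    rw [_root_.map_smul, lp.coeFn_smul, Pi.smul_apply, hf', smul_zero]

theorem isClosed_Hardy : IsClosed (Hardy : Set L2) := by
  have h : (Hardy : Set L2) =
      ⋂ (n : ℤ) (_ : n < 0), ((innerSL ℂ (fourierBasis n)) ⁻¹' {(0 : ℂ)}) := by
    ext f
    simp only [Set.mem_iInter, Set.mem_preimage, Set.mem_singleton_iff, SetLike.mem_coe]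
    constructor
    · intro hf n hn
      have := hf n hn
      rw [← fourierBasis_repr, fourierBasis.repr_apply_apply] at this
      simpa using this
    · intro hf n hn
      have := hf n hn
      rw [← fourierBasis_repr, fourierBasis.repr_apply_apply]
      simpa using this
  rw [h]
  exact isClosed_iInter fun n => isClosed_iInter fun _ =>
    (isClosed_singleton).preimage (innerSL ℂ (fourierBasis n)).continuous

instance : CompleteSpace Hardy := isClosed_Hardy.completeSpace_coe

/-- The Szegő projection `P₊ : L²(𝕋) → L²(𝕋)` onto the Hardy space. -/
def Pplus : L2 →L[ℂ] L2 := Hardy.subtypeL.comp (Submodule.orthogonalProjectionOnto Hardy)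

/-- `P₋ = I - P₊`. -/
def Pminus : L2 →L[ℂ] L2 := ContinuousLinearMap.id ℂ L2 - Pplus

/-- Underlying function of the multiplication operator. -/
def MopFun (φ : 𝕋c → ℂ) (hφ : MemLp φ ∞ μc) (f : L2) : L2 :=
  ((Lp.memLp f).smul (r := 2) hφ).toLp (φ • ⇑f)

theorem MopFun_coeFn (φ : 𝕋c → ℂ) (hφ : MemLp φ ∞ μc) (f : L2) :
    ⇑(MopFun φ hφ f) =ᵐ[μc] φ • ⇑f := MemLp.coeFn_toLp _

theorem MopFun_add (φ : 𝕋c → ℂ) (hφ : MemLp φ ∞ μc) (f g : L2) :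
    MopFun φ hφ (f + g) = MopFun φ hφ f + MopFun φ hφ g := by
  apply Lp.ext
  filter_upwards [MopFun_coeFn φ hφ (f + g), MopFun_coeFn φ hφ f, MopFun_coeFn φ hφ g,
    Lp.coeFn_add f g, Lp.coeFn_add (MopFun φ hφ f) (MopFun φ hφ g)] with x h1 h2 h3 h4 h5
  simp only [h1, h5, Pi.add_apply, h2, h3, Pi.smul_apply, Pi.mul_apply, smul_eq_mul, h4]
  ring

theorem MopFun_smul (φ : 𝕋c → ℂ) (hφ : MemLp φ ∞ μc) (c : ℂ) (f : L2) :
    MopFun φ hφ (c • f) = c • MopFun φ hφ f := by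
  apply Lp.ext
  filter_upwards [MopFun_coeFn φ hφ (c • f), MopFun_coeFn φ hφ f,
    Lp.coeFn_smul c f, Lp.coeFn_smul c (MopFun φ hφ f)] with x h1 h2 h3 h4
  simp only [h1, h4, Pi.smul_apply, Pi.mul_apply, h2, h3, smul_eq_mul]
  ring

theorem MopFun_norm (φ : 𝕋c → ℂ) (hφ : MemLp φ ∞ μc) (f : L2) :
    ‖MopFun φ hφ f‖ ≤ (eLpNorm φ ∞ μc).toReal * ‖f‖ := by
  have hrfl : MopFun φ hφ f = ((Lp.memLp f).smul (r := 2) hφ).toLp (φ • ⇑f) := rfl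
  rw [hrfl, Lp.norm_toLp (φ • ⇑f) ((Lp.memLp f).smul (r := 2) hφ), Lp.norm_def]
  have hb : eLpNorm (φ • ⇑f) 2 μc ≤ eLpNorm φ ∞ μc * eLpNorm (⇑f) 2 μc :=
    eLpNorm_smul_le_eLpNorm_top_mul_eLpNorm 2 (Lp.aestronglyMeasurable f) φ
  have hfin : eLpNorm φ ∞ μc * eLpNorm (⇑f) 2 μc ≠ ∞ :=
    ENNReal.mul_ne_top hφ.eLpNorm_ne_top (Lp.eLpNorm_ne_top f)
  calc (eLpNorm (φ • ⇑f) 2 μc).toReal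
      ≤ (eLpNorm φ ∞ μc * eLpNorm (⇑f) 2 μc).toReal := ENNReal.toReal_mono hfin hb
    _ = (eLpNorm φ ∞ μc).toReal * (eLpNorm (⇑f) 2 μc).toReal := ENNReal.toReal_mul

/-- The multiplication (Laurent) operator `M_φ` on `L²(𝕋)` with symbol `φ ∈ L∞(𝕋)`. -/
def Mop (φ : 𝕋c → ℂ) (hφ : MemLp φ ∞ μc) : L2 →L[ℂ] L2 :=
  LinearMap.mkContinuous
    { toFun := MopFun φ hφ
      map_add' := MopFun_add φ hφ
      map_smul' := MopFun_smul φ hφ }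
    (eLpNorm φ ∞ μc).toReal
    (fun f => MopFun_norm φ hφ f)

theorem Mop_coeFn (φ : 𝕋c → ℂ) (hφ : MemLp φ ∞ μc) (f : L2) :
    ⇑(Mop φ hφ f) =ᵐ[μc] fun x => φ x * f x :=
  MopFun_coeFn φ hφ f

/-- The conjugation operator `J : L²(𝕋) → L²(𝕋)`, `(Jf)(z) = f(z̄)`
(composition with `x ↦ -x` on the additive circle). -/
def Jop : L2 →L[ℂ] L2 :=
  LinearMap.mkContinuous
    { toFun := fun f =>
        Lp.compMeasurePreserving (fun x : 𝕋c => -x) (Measure.measurePreserving_neg μc) f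
      map_add' := by
        intro f g
        exact map_add (Lp.compMeasurePreserving _ (Measure.measurePreserving_neg μc)) f g
      map_smul' := by
        intro c f
        apply Lp.ext
        simp only [RingHom.id_apply]
        have hmp := Measure.measurePreserving_neg (μ := μc)
        have h1 := Lp.coeFn_compMeasurePreserving (μ := μc) (c • f) hmp
        have h2 := Lp.coeFn_compMeasurePreserving (μ := μc) f hmp
        have h3 : ⇑(c • f) ∘ (fun x : 𝕋c => -x) =ᵐ[μc] (c • ⇑f) ∘ (fun x : 𝕋c => -x) :=
          hmp.quasiMeasurePreserving.ae_eq_comp (Lp.coeFn_smul c f)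
        have h4 : (c • ⇑f) ∘ (fun x : 𝕋c => -x) = c • (⇑f ∘ fun x : 𝕋c => -x) := rfl
        have h5 : c • (⇑f ∘ fun x : 𝕋c => -x) =ᵐ[μc]
            c • ⇑(Lp.compMeasurePreserving (fun x : 𝕋c => -x) hmp f) :=
          h2.symm.const_smul c
        exact ((h1.trans h3).trans ((h4 ▸ h5 : _))).trans (Lp.coeFn_smul c _).symm }
    1
    (by
      intro f
      simp only [LinearMap.coe_mk, AddHom.coe_mk, one_mul]
      exact le_of_eq (Lp.norm_compMeasurePreserving f _))

/-- The Toeplitz operator `T_φ = P₊ M_φ |_{H²}` with symbol `φ ∈ L∞(𝕋)`. -/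
def Toep (φ : 𝕋c → ℂ) (hφ : MemLp φ ∞ μc) : Hardy →L[ℂ] Hardy :=
  (Submodule.orthogonalProjectionOnto Hardy).comp ((Mop φ hφ).comp Hardy.subtypeL)

/-- The Hankel operator `H_φ = P₊ M_φ J |_{H²}` with symbol `φ ∈ L∞(𝕋)`. -/
def Hank (φ : 𝕋c → ℂ) (hφ : MemLp φ ∞ μc) : Hardy →L[ℂ] Hardy :=
  (Submodule.orthogonalProjectionOnto Hardy).comp ((Mop φ hφ).comp (Jop.comp Hardy.subtypeL))

/-- The coordinate function `z` on the circle. -/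
def zFun : 𝕋c → ℂ := fun x => fourier 1 x

theorem zFun_memℒp : MemLp zFun ∞ μc := by
  refine memLp_top_of_bound ((fourier 1).continuous.aestronglyMeasurable) 1
    (Filter.Eventually.of_forall fun x => ?_)
  simp only [zFun, fourier_apply, Circle.norm_coe, le_refl]

/-- The unilateral shift `T_z`. -/
def Tz : Hardy →L[ℂ] Hardy := Toep zFun zFun_memℒp

/-- The bilateral shift `M_z` on `L²(𝕋)`. -/
def Mz : L2 →L[ℂ] L2 := Mop zFun zFun_memℒp

/-- `A` is a Toeplitz + Hankel operator. -/
def IsToepPlusHank (A : Hardy →L[ℂ] Hardy) : Prop :=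
  ∃ (φ ψ : 𝕋c → ℂ) (hφ : MemLp φ ∞ μc) (hψ : MemLp ψ ∞ μc), A = Toep φ hφ + Hank ψ hψ

/-- `φ` belongs to `H^∞`: it is essentially bounded and all its negative Fourier
coefficients vanish. -/
def IsHinf (φ : 𝕋c → ℂ) : Prop :=
  MemLp φ ∞ μc ∧ ∀ n : ℤ, n < 0 → fourierCoeff φ n = 0

/-- `θ` is an inner function: `θ ∈ H^∞` and `|θ| = 1` a.e. on the circle. -/
def IsInner (θ : 𝕋c → ℂ) : Prop :=
  IsHinf θ ∧ ∀ᵐ x ∂μc, ‖θ x‖ = 1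

theorem Mop_norm_of_inner {θ : 𝕋c → ℂ} (hθ : IsInner θ) (f : L2) :
    ‖Mop θ hθ.1.1 f‖ = ‖f‖ := by
  have h1 : ⇑(Mop θ hθ.1.1 f) =ᵐ[μc] θ • ⇑f := MopFun_coeFn θ hθ.1.1 f
  rw [Lp.norm_def, Lp.norm_def]
  congr 1
  rw [eLpNorm_congr_ae h1]
  apply eLpNorm_congr_norm_ae
  filter_upwards [hθ.2] with x hx
  simp [norm_smul, hx]

/-- The (Beurling-type) subspace `θ H²` of the Hardy space, for an inner function `θ`. -/
def thetaSub (θ : 𝕋c → ℂ) (hθ : IsInner θ) : Submodule ℂ Hardy where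
  carrier := {f | ∃ g : Hardy, (f : L2) = Mop θ hθ.1.1 (g : L2)}
  add_mem' := by
    rintro f f' ⟨g, hg⟩ ⟨g', hg'⟩
    exact ⟨g + g', by
      simp only [Submodule.coe_add, hg, hg']
      rw [← map_add]⟩
  zero_mem' := ⟨0, by simp⟩
  smul_mem' := by
    rintro c f ⟨g, hg⟩
    exact ⟨c • g, by
      rw [Submodule.coe_smul, hg, ← (Mop θ hθ.1.1).map_smul]
      rfl⟩

theorem isClosed_thetaSub (θ : 𝕋c → ℂ) (hθ : IsInner θ) :
    IsClosed ((thetaSub θ hθ) : Set Hardy) := by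
  have hiso : Isometry (fun g : Hardy => Mop θ hθ.1.1 (g : L2)) := by
    apply Isometry.of_dist_eq
    intro g g'
    rw [dist_eq_norm, dist_eq_norm, ← map_sub, ← Submodule.coe_sub, Mop_norm_of_inner hθ]
    rfl
  have hrange : IsClosed (Set.range fun g : Hardy => Mop θ hθ.1.1 (g : L2)) :=
    hiso.isClosedEmbedding.isClosed_range
  have hset : ((thetaSub θ hθ) : Set Hardy) =
      (Subtype.val) ⁻¹' (Set.range fun g : Hardy => Mop θ hθ.1.1 (g : L2)) := by
    ext f
    constructor
    · rintro ⟨g, hg⟩; exact ⟨g, hg.symm⟩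
    · rintro ⟨g, hg⟩; exact ⟨g, hg.symm⟩
  rw [hset]
  exact hrange.preimage continuous_subtype_val

/-- The model space `𝒦_θ = H² ⊖ θH²`. -/
def modelSpace (θ : 𝕋c → ℂ) (hθ : IsInner θ) : Submodule ℂ Hardy := (thetaSub θ hθ)ᗮ

/-- The orthogonal projection of `H²` onto `θH²`. -/
def Ptheta (θ : 𝕋c → ℂ) (hθ : IsInner θ) : Hardy →L[ℂ] Hardy :=
  haveI : CompleteSpace (thetaSub θ hθ) := (isClosed_thetaSub θ hθ).completeSpace_coe
  (thetaSub θ hθ).subtypeL.comp (Submodule.orthogonalProjectionOnto (thetaSub θ hθ))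

/-- The orthogonal projection of `H²` onto the model space `𝒦_θ`. -/
def Pmodel (θ : 𝕋c → ℂ) (hθ : IsInner θ) : Hardy →L[ℂ] Hardy :=
  haveI hc : CompleteSpace (thetaSub θ hθ) := (isClosed_thetaSub θ hθ).completeSpace_coe
  haveI h2 : Submodule.HasOrthogonalProjection (modelSpace θ hθ) :=
    (inferInstance : Submodule.HasOrthogonalProjection (thetaSub θ hθ)ᗮ)
  (modelSpace θ hθ).subtypeL.comp (Submodule.orthogonalProjectionOnto (modelSpace θ hθ))

/-- The monomial `z^k`, as an element of the Hardy space. -/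
def monoH (k : ℕ) : Hardy :=
  ⟨fourierLp 2 (k : ℤ), by
    intro n hn
    rw [← fourierBasis_repr]
    have hb : (fourierLp 2 (k : ℤ) : L2) = fourierBasis (k : ℤ) := by rw [coe_fourierBasis]
    rw [hb, fourierBasis.repr_self]
    exact lp.single_apply_ne 2 (k : ℤ) _ (by omega)⟩

/-- `T_z^*`, the adjoint of the unilateral shift. -/
def TzStar : Hardy →L[ℂ] Hardy := ContinuousLinearMap.adjoint Tz

/-- `M_z^*`, the adjoint of the bilateral shift. -/
def MzStar : L2 →L[ℂ] L2 := ContinuousLinearMap.adjoint Mz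

/-- The constant function `1` as an element of `L²(𝕋)`. -/
def oneL2 : L2 := (memLp_const (1 : ℂ)).toLp (fun _ => (1 : ℂ))

/-- The function `z̄ = conj z` on the circle. -/
def zbarFun : 𝕋c → ℂ := fun x => fourier (-1) x

theorem zbarFun_memℒp : MemLp zbarFun ∞ μc := by
  refine memLp_top_of_bound ((fourier (-1)).continuous.aestronglyMeasurable) 1
    (Filter.Eventually.of_forall fun x => ?_)
  simp only [zbarFun, fourier_apply, Circle.norm_coe, le_refl]

/-- The function `z̄` as an element of `L²(𝕋)`. -/
def zbarL2 : L2 := (zbarFun_memℒp.mono_exponent le_top).toLp zbarFun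

theorem zbarsq_memℒp {ψ : 𝕋c → ℂ} (hψ : MemLp ψ ∞ μc) :
    MemLp (fun x : 𝕋c => ((starRingEnd ℂ) (zFun x) ^ 2 - 1) * ψ x) ∞ μc := by
  have hc : Continuous fun x : 𝕋c => (starRingEnd ℂ) (zFun x) ^ 2 - 1 := by
    have h1 : Continuous (zFun) := (fourier 1).continuous
    exact ((h1.star.pow 2).sub continuous_const)
  have hb : MemLp (fun x : 𝕋c => (starRingEnd ℂ) (zFun x) ^ 2 - 1) ∞ μc := by
    refine memLp_top_of_bound hc.aestronglyMeasurable 2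
      (Filter.Eventually.of_forall fun x => ?_)
    calc ‖(starRingEnd ℂ) (zFun x) ^ 2 - 1‖ ≤ ‖(starRingEnd ℂ) (zFun x) ^ 2‖ + ‖(1 : ℂ)‖ :=
          norm_sub_le _ _
      _ ≤ 2 := by
          rw [norm_pow, RCLike.norm_conj]
          simp only [zFun, fourier_apply, Circle.norm_coe, norm_one]
          norm_num
  have h2 := hψ.smul (r := ∞) hb
  have h3 : ((fun x : 𝕋c => (starRingEnd ℂ) (zFun x) ^ 2 - 1) • ψ) =
      fun x : 𝕋c => ((starRingEnd ℂ) (zFun x) ^ 2 - 1) * ψ x := by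
    funext x
    simp only [Pi.smul_apply, smul_eq_mul, Pi.mul_apply]
  exact h3 ▸ h2

/-- `A` is `θ`-paired: `A = T_φ P_{θH²} + T_ψ P_{𝒦_θ}` for some `φ, ψ ∈ H^∞`. -/
def IsThetaPaired (θ : 𝕋c → ℂ) (hθ : IsInner θ) (X : Hardy →L[ℂ] Hardy) : Prop :=
  ∃ (φ ψ : 𝕋c → ℂ) (hφ : IsHinf φ) (hψ : IsHinf ψ),
    X = (Toep φ hφ.1).comp (Ptheta θ hθ) + (Toep ψ hψ.1).comp (Pmodel θ hθ)

/-!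
Since `J` turns multiplication by `z` into multiplication by `z̄`, and `T_z^*` is the compression
of multiplication by `z̄` to `H²`, both `H_ψ T_z` and `T_z^* H_ψ` equal `H_{z̄ψ}`. Hence
`T_z^* H_ψ T_z - H_ψ = (T_z^*)² H_ψ - H_ψ = H_{(z̄² - 1)ψ}`, so `f ∈ ker H_{(z̄² - 1)ψ}` exactly
when `H_ψ f` is fixed by `(T_z^*)²`. A fixed point of `(T_z^*)²` has Fourier coefficients that are
2-periodic on `ℕ`, and square summability forces them to vanish: the two kernels coincide.
-/

theorem zbarFun_eq_conj (x : 𝕋c) : zbarFun x = starRingEnd ℂ (zFun x) := fourier_neg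

theorem zFun_neg (x : 𝕋c) : zFun (-x) = zbarFun x := by
  rw [zbarFun, zFun, fourier_apply, fourier_apply, smul_neg, neg_smul]

theorem zbarFun_mul_memLp {φ : 𝕋c → ℂ} (hφ : MemLp φ ∞ μc) :
    MemLp (fun x => zbarFun x * φ x) ∞ μc :=
  hφ.mul' zbarFun_memℒp

theorem Mop_eq_comp {φ χ ω : 𝕋c → ℂ} (hφ : MemLp φ ∞ μc) (hχ : MemLp χ ∞ μc)
    (hω : MemLp ω ∞ μc) (h : ∀ x, ω x = φ x * χ x) :
    Mop ω hω = (Mop φ hφ).comp (Mop χ hχ) := by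
  ext1 f
  apply Lp.ext
  filter_upwards [Mop_coeFn ω hω f, Mop_coeFn φ hφ (Mop χ hχ f), Mop_coeFn χ hχ f]
    with x h₀ h₁ h₂
  rw [ContinuousLinearMap.comp_apply, h₀, h₁, h₂, h, mul_assoc]

theorem Mop_eq_sub {φ χ ω : 𝕋c → ℂ} (hφ : MemLp φ ∞ μc) (hχ : MemLp χ ∞ μc)
    (hω : MemLp ω ∞ μc) (h : ∀ x, ω x = φ x - χ x) :
    Mop ω hω = Mop φ hφ - Mop χ hχ := by
  ext1 f
  apply Lp.ext
  filter_upwards [Mop_coeFn ω hω f, Mop_coeFn φ hφ f, Mop_coeFn χ hχ f,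
    Lp.coeFn_sub (Mop φ hφ f) (Mop χ hχ f)] with x h₀ h₁ h₂ h₃
  rw [sub_apply, h₀, h₃, Pi.sub_apply, h₁, h₂, h, sub_mul]

theorem Jop_coeFn (f : L2) : ⇑(Jop f) =ᵐ[μc] fun x => f (-x) := by
  have h : Jop f =
      Lp.compMeasurePreserving (fun x : 𝕋c => -x) (Measure.measurePreserving_neg μc) f := rfl
  rw [h]
  exact Lp.coeFn_compMeasurePreserving f _

theorem Jop_Mz (f : L2) : Jop (Mz f) = Mop zbarFun zbarFun_memℒp (Jop f) := by
  apply Lp.ext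
  have hMz := (Measure.measurePreserving_neg μc).quasiMeasurePreserving.ae_eq_comp
    (Mop_coeFn zFun zFun_memℒp f)
  filter_upwards [Jop_coeFn (Mz f), hMz, Mop_coeFn _ zbarFun_memℒp (Jop f), Jop_coeFn f]
    with x h h₁ h₂ h₃
  rw [h, h₂, h₃, ← zFun_neg]
  exact h₁

theorem inner_Mz_left (u v : L2) : ⟪Mz u, v⟫_ℂ = ⟪u, Mop zbarFun zbarFun_memℒp v⟫_ℂ := by
  rw [Mz, L2.inner_def, L2.inner_def]
  refine integral_congr_ae ?_
  filter_upwards [Mop_coeFn _ _ u, Mop_coeFn _ zbarFun_memℒp v] with x h₁ h₂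
  rw [h₁, h₂]
  simp only [RCLike.inner_apply, map_mul, zbarFun_eq_conj]
  ring

theorem fourierCoeff_Mz (f : L2) (n : ℤ) :
    fourierCoeff (Mz f) n = fourierCoeff f (n - 1) := by
  rw [Mz, fourierCoeff_congr_ae (Mop_coeFn _ _ f), fourierCoeff, fourierCoeff]
  congr 1 with x
  rw [smul_eq_mul, smul_eq_mul, ← mul_assoc, zFun, ← fourier_add, neg_sub, sub_eq_neg_add]

theorem Mz_mem_Hardy {f : L2} (hf : f ∈ Hardy) : Mz f ∈ Hardy := fun n hn => by
  rw [fourierCoeff_Mz]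
  exact hf (n - 1) (by omega)

theorem coe_Tz (f : Hardy) : (Tz f : L2) = Mz f :=
  (Submodule.starProjection_eq_self_iff (K := Hardy)).mpr (Mz_mem_Hardy f.2)

theorem inner_Hank (φ : 𝕋c → ℂ) (hφ : MemLp φ ∞ μc) (f g : Hardy) :
    ⟪g, Hank φ hφ f⟫_ℂ = ⟪(g : L2), Mop φ hφ (Jop f)⟫_ℂ :=
  Submodule.inner_orthogonalProjectionOnto_eq_of_mem_left _ _

theorem Hank_comp_Tz (φ : 𝕋c → ℂ) (hφ : MemLp φ ∞ μc)
    (h : MemLp (fun x => zbarFun x * φ x) ∞ μc) :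
    (Hank φ hφ).comp Tz = Hank (fun x => zbarFun x * φ x) h := by
  ext1 f
  refine ext_inner_left ℂ fun g => ?_
  rw [ContinuousLinearMap.comp_apply, inner_Hank, inner_Hank, coe_Tz, Jop_Mz,
    Mop_eq_comp hφ zbarFun_memℒp h fun x => mul_comm _ _]
  rfl

theorem TzStar_comp_Hank (φ : 𝕋c → ℂ) (hφ : MemLp φ ∞ μc)
    (h : MemLp (fun x => zbarFun x * φ x) ∞ μc) :
    TzStar.comp (Hank φ hφ) = Hank (fun x => zbarFun x * φ x) h := by
  ext1 f
  refine ext_inner_left ℂ fun g => ?_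
  rw [ContinuousLinearMap.comp_apply, TzStar, ContinuousLinearMap.adjoint_inner_right,
    inner_Hank, inner_Hank, coe_Tz, inner_Mz_left,
    Mop_eq_comp zbarFun_memℒp hφ h fun x => rfl]
  rfl

theorem Hank_eq_sub {φ χ ω : 𝕋c → ℂ} (hφ : MemLp φ ∞ μc) (hχ : MemLp χ ∞ μc)
    (hω : MemLp ω ∞ μc) (h : ∀ x, ω x = φ x - χ x) :
    Hank ω hω = Hank φ hφ - Hank χ hχ := by
  ext1 f
  simp only [Hank, ContinuousLinearMap.comp_apply, sub_apply, Mop_eq_sub hφ hχ hω h, map_sub]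

theorem Hank_conj_zFun_sq_sub_one_mul (ψ : 𝕋c → ℂ) (hψ : MemLp ψ ∞ μc) :
    Hank (fun x => (starRingEnd ℂ (zFun x) ^ 2 - 1) * ψ x) (zbarsq_memℒp hψ) =
      TzStar.comp (TzStar.comp (Hank ψ hψ)) - Hank ψ hψ := by
  have hz := zbarFun_mul_memLp hψ
  rw [TzStar_comp_Hank ψ hψ hz, TzStar_comp_Hank _ hz (zbarFun_mul_memLp hz)]
  exact Hank_eq_sub _ hψ _ fun x => by rw [← zbarFun_eq_conj]; ring

theorem Mz_fourierLp (n : ℤ) : Mz (fourierLp 2 n) = fourierLp 2 (n + 1) := by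
  apply Lp.ext
  filter_upwards [Mop_coeFn zFun zFun_memℒp (fourierLp 2 n), coeFn_fourierLp 2 n,
    coeFn_fourierLp 2 (n + 1)] with x h₁ h₂ h₃
  rw [Mz, h₁, h₂, h₃, zFun, ← fourier_add, add_comm]

theorem fourierCoeff_eq_inner {T : ℝ} [Fact (0 < T)] (u : Lp ℂ 2 (@haarAddCircle T _))
    (n : ℤ) : fourierCoeff u n = ⟪fourierLp 2 n, u⟫_ℂ := by
  rw [← fourierBasis_repr, fourierBasis.repr_apply_apply, coe_fourierBasis]

theorem fourierCoeff_TzStar (h : Hardy) (k : ℕ) :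
    fourierCoeff (TzStar h : L2) k = fourierCoeff (h : L2) (k + 1) := by
  rw [fourierCoeff_eq_inner, fourierCoeff_eq_inner]
  change ⟪monoH k, TzStar h⟫_ℂ = _
  rw [TzStar, ContinuousLinearMap.adjoint_inner_right, Submodule.coe_inner, coe_Tz]
  exact congrArg (⟪·, (h : L2)⟫_ℂ) (Mz_fourierLp k)

theorem eq_zero_of_fourierCoeff_eq_zero {T : ℝ} [Fact (0 < T)] {u : Lp ℂ 2 (@haarAddCircle T _)}
    (hu : ∀ n, fourierCoeff u n = 0) : u = 0 := by
  have hsum := hasSum_fourier_series_L2 u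
  simp only [hu, zero_smul] at hsum
  exact hsum.unique hasSum_zero

theorem eq_zero_of_TzStar_sq_eq_self {h : Hardy} (hh : TzStar (TzStar h) = h) : h = 0 := by
  have hstep : ∀ j : ℕ, fourierCoeff (h : L2) (j + 2) = fourierCoeff (h : L2) j := by
    intro j
    conv_rhs => rw [← hh]
    rw [fourierCoeff_TzStar, ← Nat.cast_succ, fourierCoeff_TzStar]
    push_cast
    ring_nf
  have hperiodic : ∀ k n : ℕ, fourierCoeff (h : L2) (k + 2 * n) = fourierCoeff (h : L2) k := by
    intro k n
    induction n with
    | zero => simp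
    | succ n ih =>
      have hshift := hstep (k + 2 * n)
      push_cast at hshift
      rw [← ih, ← hshift]
      push_cast
      ring_nf
  have hnonneg : ∀ k : ℕ, fourierCoeff (h : L2) k = 0 := by
    intro k
    have hinj : Function.Injective fun n : ℕ => (k : ℤ) + 2 * n := fun a b hab => by
      simp only at hab
      omega
    have := (hasSum_sq_fourierCoeff (h : L2)).summable.comp_injective hinj
    simp only [Function.comp_def, hperiodic, summable_const_iff] at this
    simpa using this
  refine Subtype.ext (eq_zero_of_fourierCoeff_eq_zero fun n => ?_)
  rcases lt_or_ge n 0 with hn | hn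
  · exact h.2 n hn
  · lift n to ℕ using hn
    exact hnonneg n

theorem ker_Hank_conj_zFun_sq_sub_one_mul (ψ : 𝕋c → ℂ) (hψ : MemLp ψ ∞ μc) :
    LinearMap.ker (Hank (fun x => (starRingEnd ℂ (zFun x) ^ 2 - 1) * ψ x)
      (zbarsq_memℒp hψ) : Hardy →ₗ[ℂ] Hardy) = LinearMap.ker (Hank ψ hψ : Hardy →ₗ[ℂ] Hardy) := by
  ext f
  rw [LinearMap.mem_ker, LinearMap.mem_ker, ContinuousLinearMap.coe_coe,
    ContinuousLinearMap.coe_coe, Hank_conj_zFun_sq_sub_one_mul ψ hψ, sub_apply,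
    ContinuousLinearMap.comp_apply, ContinuousLinearMap.comp_apply, sub_eq_zero]
  exact ⟨eq_zero_of_TzStar_sq_eq_self, fun h => by rw [h, map_zero, map_zero]⟩

/-- **Theorem.** If the Hankel operator `H_ψ` has nonzero kernel, then
`T_z* H_ψ T_z - H_ψ = H_{(z̄² - 1)ψ}` and `H_{(z̄² - 1)ψ}` also has nonzero kernel; conversely,
if `H_{(z̄² - 1)ψ}` has nonzero kernel then so does `H_ψ`. -/
theorem hankel_kernel_transfer (ψ : 𝕋c → ℂ) (hψ : MemLp ψ ∞ μc) :
    (LinearMap.ker (Hank ψ hψ : Hardy →ₗ[ℂ] Hardy) ≠ ⊥ →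
      TzStar.comp ((Hank ψ hψ).comp Tz) - Hank ψ hψ =
          Hank (fun x : 𝕋c => ((starRingEnd ℂ) (zFun x) ^ 2 - 1) * ψ x) (zbarsq_memℒp hψ) ∧
        LinearMap.ker
            (Hank (fun x : 𝕋c => ((starRingEnd ℂ) (zFun x) ^ 2 - 1) * ψ x)
              (zbarsq_memℒp hψ) : Hardy →ₗ[ℂ] Hardy) ≠ ⊥) ∧
    (LinearMap.ker
          (Hank (fun x : 𝕋c => ((starRingEnd ℂ) (zFun x) ^ 2 - 1) * ψ x)
            (zbarsq_memℒp hψ) : Hardy →ₗ[ℂ] Hardy) ≠ ⊥ →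
      LinearMap.ker (Hank ψ hψ : Hardy →ₗ[ℂ] Hardy) ≠ ⊥) := by
  have hz := zbarFun_mul_memLp hψ
  have hidentity : TzStar.comp ((Hank ψ hψ).comp Tz) - Hank ψ hψ =
      Hank (fun x => (starRingEnd ℂ (zFun x) ^ 2 - 1) * ψ x) (zbarsq_memℒp hψ) := by
    rw [Hank_conj_zFun_sq_sub_one_mul, Hank_comp_Tz ψ hψ hz, TzStar_comp_Hank ψ hψ hz]
  rw [ker_Hank_conj_zFun_sq_sub_one_mul ψ hψ]
  exact ⟨fun hker => ⟨hidentity, hker⟩, id⟩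

end PaperTH
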